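/- arXiv:2203.04023 — 7 statements merged into one kernel-verified Lean document; each statement's English description precedes it below -/
import Mathlib

section
/- Let X and Y be Banach spaces, let T : X → Y be a bounded linear operator that is bounded below (i.e., there is C > 0 with ‖Tx‖ ≥ C‖x‖ for all x), and let C ⊆ X be a bounded set. If x₀ ∈ C satisfies ‖T x₀‖ = sup {‖Tx‖ : x ∈ C} and T x₀ is a locally uniformly rotund point of Y, then for every y* ∈ Y* with ‖y*‖ = 1 and Re y*(T x₀) = sup {‖Tx‖ : x ∈ C}, the functional T* y* strongly exposes C at x₀. -/
open Filter Topology RCLike Bornology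

/-- `f` strongly exposes the bounded set `C` at `x₀`. -/
def StronglyExposes {𝕜 X : Type} [RCLike 𝕜] [NormedAddCommGroup X] [NormedSpace 𝕜 X]
    (f : X →L[𝕜] 𝕜) (C : Set X) (x₀ : X) : Prop :=
  x₀ ∈ C ∧ (∀ x ∈ C, re (f x) ≤ re (f x₀)) ∧
    ∀ u : ℕ → X, (∀ n, u n ∈ C) →
      Tendsto (fun n => re (f (u n))) atTop (𝓝 (re (f x₀))) →
      Tendsto u atTop (𝓝 x₀)

/-- `f` strongly exposes the closed unit ball at `x₀`. -/
def StronglyExposesBall {𝕜 X : Type} [RCLike 𝕜] [NormedAddCommGroup X] [NormedSpace 𝕜 X]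
    (f : X →L[𝕜] 𝕜) (x₀ : X) : Prop :=
  ‖x₀‖ ≤ 1 ∧ re (f x₀) = ‖f‖ ∧
    ∀ u : ℕ → X, (∀ n, ‖u n‖ ≤ 1) →
      Tendsto (fun n => re (f (u n))) atTop (𝓝 ‖f‖) →
      Tendsto u atTop (𝓝 x₀)

/-- `T` absolutely strongly exposes the closed unit ball at `x₀`. -/
def AbsStronglyExposes {𝕜 X Y : Type} [RCLike 𝕜] [NormedAddCommGroup X] [NormedSpace 𝕜 X]
    [NormedAddCommGroup Y] [NormedSpace 𝕜 Y] (T : X →L[𝕜] Y) (x₀ : X) : Prop :=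
  ‖x₀‖ ≤ 1 ∧
    ∀ u : ℕ → X, (∀ n, ‖u n‖ ≤ 1) →
      Tendsto (fun n => ‖T (u n)‖) atTop (𝓝 ‖T‖) →
      ∃ θ : ℕ → 𝕜, (∀ n, ‖θ n‖ = 1) ∧ Tendsto (fun n => θ n • u n) atTop (𝓝 x₀)

/-- A locally uniformly rotund (LUR) point of a normed space. -/
def LURPoint {Y : Type} [NormedAddCommGroup Y] (y₀ : Y) : Prop :=
  ∀ u : ℕ → Y, (∀ n, ‖u n‖ ≤ ‖y₀‖) →
    Tendsto (fun n => ‖u n + y₀‖) atTop (𝓝 (2 * ‖y₀‖)) →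
    Tendsto u atTop (𝓝 y₀)

section

variable {𝕜 Y : Type} [RCLike 𝕜] [NormedAddCommGroup Y] [NormedSpace 𝕜 Y]

theorem ContinuousLinearMap.re_apply_le_norm {g : Y →L[𝕜] 𝕜} (hg : ‖g‖ ≤ 1) (y : Y) :
    re (g y) ≤ ‖y‖ :=
  calc re (g y) ≤ ‖g y‖ := re_le_norm _
    _ ≤ 1 * ‖y‖ := g.le_of_opNorm_le hg y
    _ = ‖y‖ := one_mul _

theorem LURPoint.tendsto_of_tendsto_re {y₀ : Y} (hLUR : LURPoint y₀) {g : Y →L[𝕜] 𝕜}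
    (hg : ‖g‖ ≤ 1) (hre : re (g y₀) = ‖y₀‖) {u : ℕ → Y} (hu : ∀ n, ‖u n‖ ≤ ‖y₀‖)
    (hlim : Tendsto (fun n => re (g (u n))) atTop (𝓝 ‖y₀‖)) :
    Tendsto u atTop (𝓝 y₀) := by
  refine hLUR u hu (tendsto_of_tendsto_of_tendsto_of_le_of_le
    (g := fun n => re (g (u n)) + ‖y₀‖) ?_ tendsto_const_nhds (fun n => ?_) (fun n => ?_))
  · simpa only [two_mul] using hlim.add_const ‖y₀‖
  · calc re (g (u n)) + ‖y₀‖ = re (g (u n + y₀)) := by rw [map_add, map_add, hre]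
      _ ≤ ‖u n + y₀‖ := g.re_apply_le_norm hg _
  · linarith [norm_add_le (u n) y₀, hu n]

end

theorem ContinuousLinearMap.tendsto_of_tendsto_apply_of_bounded_below {R X Y : Type*} [Semiring R]
    [SeminormedAddCommGroup X] [Module R X] [SeminormedAddCommGroup Y] [Module R Y]
    (T : X →L[R] Y) {c : ℝ} (hc : 0 < c) (hbelow : ∀ x, c * ‖x‖ ≤ ‖T x‖)
    {u : ℕ → X} {x₀ : X} (hlim : Tendsto (fun n => T (u n)) atTop (𝓝 (T x₀))) :
    Tendsto u atTop (𝓝 x₀) := by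
  rw [tendsto_iff_norm_sub_tendsto_zero] at hlim ⊢
  refine squeeze_zero (fun n => norm_nonneg _) (fun n => ?_) (by simpa using hlim.const_mul c⁻¹)
  rw [le_inv_mul_iff₀ hc, ← map_sub]
  exact hbelow _

theorem stmt0_general {𝕜 X Y : Type} [RCLike 𝕜]
    [NormedAddCommGroup X] [NormedSpace 𝕜 X]
    [NormedAddCommGroup Y] [NormedSpace 𝕜 Y]
    (T : X →L[𝕜] Y) (c : ℝ) (hc : 0 < c) (hbelow : ∀ x, c * ‖x‖ ≤ ‖T x‖)
    (C : Set X)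
    (x₀ : X) (hx₀ : x₀ ∈ C) (hmax : ∀ x ∈ C, ‖T x‖ ≤ ‖T x₀‖)
    (hLUR : LURPoint (T x₀))
    (g : Y →L[𝕜] 𝕜) (hg : ‖g‖ = 1) (hre : re (g (T x₀)) = ‖T x₀‖) :
    StronglyExposes (g.comp T) C x₀ := by
  simp only [StronglyExposes, ContinuousLinearMap.comp_apply, hre]
  refine ⟨hx₀, fun x hx => (g.re_apply_le_norm hg.le _).trans (hmax x hx), fun u hu hlim => ?_⟩
  exact T.tendsto_of_tendsto_apply_of_bounded_below hc hbelow
    (hLUR.tendsto_of_tendsto_re hg.le hre (fun n => hmax _ (hu n)) hlim)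

theorem stmt0 {𝕜 X Y : Type} [RCLike 𝕜]
    [NormedAddCommGroup X] [NormedSpace 𝕜 X] [CompleteSpace X]
    [NormedAddCommGroup Y] [NormedSpace 𝕜 Y] [CompleteSpace Y]
    (T : X →L[𝕜] Y) (c : ℝ) (hc : 0 < c) (hbelow : ∀ x, c * ‖x‖ ≤ ‖T x‖)
    (C : Set X) (hC : IsBounded C)
    (x₀ : X) (hx₀ : x₀ ∈ C) (hmax : ∀ x ∈ C, ‖T x‖ ≤ ‖T x₀‖)
    (hLUR : LURPoint (T x₀))
    (g : Y →L[𝕜] 𝕜) (hg : ‖g‖ = 1) (hre : re (g (T x₀)) = ‖T x₀‖) :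
    StronglyExposes (g.comp T) C x₀ :=
  stmt0_general T c hc hbelow C x₀ hx₀ hmax hLUR g hg hre
end

section
/- Let X and Y be Banach spaces. For each ε > 0, the set A_ε of operators T ∈ L(X,Y) for which there exist x₀ ∈ X and η > 0 such that the slice {x ∈ B_X : ‖Tx‖ > ‖T‖ − η} is contained in 𝕋·B(x₀, ε) (where 𝕋 denotes the unimodular scalars) is open in L(X,Y), and the set ASE(X,Y) of absolutely strongly exposing operators equals the intersection ⋂ₙ A_{rₙ} for any sequence {rₙ} of positive numbers converging to 0. Consequently, ASE(X,Y) is a Gδ subset of L(X,Y). -/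
open Filter Topology RCLike Bornology

/-- The open set `A_ε` of operators having a slice contained in `𝕋·B(x₀, ε)`. -/
def Aeps {𝕜 X Y : Type} [RCLike 𝕜] [NormedAddCommGroup X] [NormedSpace 𝕜 X]
    [NormedAddCommGroup Y] [NormedSpace 𝕜 Y] (ε : ℝ) : Set (X →L[𝕜] Y) :=
  {T | ∃ (x₀ : X) (η : ℝ), 0 < η ∧
    ∀ x : X, ‖x‖ ≤ 1 → ‖T x‖ > ‖T‖ - η → ∃ θ : 𝕜, ‖θ‖ = 1 ∧ ‖θ • x - x₀‖ < ε}

/-!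
An operator absolutely strongly exposes `x₀` exactly when for every `ε > 0` some slice of the
ball lies in `𝕋 · B(x₀, ε)`. If `T` lies in every `A_ε`, pick slices lying in `𝕋 · B(c j, 2⁻ʲ)`.
Any two slices meet, so `c j` and `c (j + 1)` agree up to a unimodular factor within
`3 / 2 · 2⁻ʲ`; multiplying the `c j` by the accumulated factors gives a Cauchy sequence, and its
limit in the Banach space `X` is the exposed point.
-/

section Slices

variable {𝕜 X Y : Type} [RCLike 𝕜] [NormedAddCommGroup X] [NormedSpace 𝕜 X]
    [NormedAddCommGroup Y] [NormedSpace 𝕜 Y]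

/-- The slice `{x ∈ B_X : ‖T x‖ > ‖T‖ - η}` lies in `𝕋 · B(x₀, ε)`. -/
def SliceSubsetBall (T : X →L[𝕜] Y) (x₀ : X) (η ε : ℝ) : Prop :=
  ∀ x : X, ‖x‖ ≤ 1 → ‖T x‖ > ‖T‖ - η → ∃ θ : 𝕜, ‖θ‖ = 1 ∧ ‖θ • x - x₀‖ < ε

theorem isOpen_aeps (ε : ℝ) : IsOpen (Aeps (𝕜 := 𝕜) (X := X) (Y := Y) ε) := by
  refine Metric.isOpen_iff.mpr ?_
  rintro T ⟨x₀, η, hη, hT⟩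
  refine ⟨η / 3, by positivity, fun S hS => ⟨x₀, η / 3, by positivity, fun x hx hSx => hT x hx ?_⟩⟩
  rw [Metric.mem_ball, dist_eq_norm] at hS
  have hSTx : ‖S x - T x‖ ≤ ‖S - T‖ := (S - T).unit_le_opNorm x hx
  have hx' := norm_sub_norm_le (S x) (T x)
  have hST := norm_sub_norm_le T S
  rw [norm_sub_rev] at hST
  linarith

theorem mem_aeps_iff {T : X →L[𝕜] Y} {ε : ℝ} :
    T ∈ Aeps ε ↔ ∃ x₀ η, 0 < η ∧ SliceSubsetBall T x₀ η ε :=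
  Iff.rfl

theorem exists_norm_le_one_lt_norm_apply (T : X →L[𝕜] Y) {η : ℝ} (hη : 0 < η) :
    ∃ x : X, ‖x‖ ≤ 1 ∧ ‖T x‖ > ‖T‖ - η := by
  obtain ⟨x, hx, hTx⟩ := T.exists_lt_apply_of_lt_opNorm (r := ‖T‖ - η) (by linarith)
  exact ⟨x, hx.le, hTx⟩

theorem exists_unimodular_forall_norm_smul_sub_le (v w : X) :
    ∃ θ : 𝕜, ‖θ‖ = 1 ∧ ∀ θ' : 𝕜, ‖θ'‖ = 1 → ‖θ • v - w‖ ≤ ‖θ' • v - w‖ := by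
  obtain ⟨θ, hθ, hmin⟩ := (isCompact_sphere (0 : 𝕜) 1).exists_isMinOn
    (NormedSpace.sphere_nonempty.mpr zero_le_one)
    (Continuous.continuousOn (by fun_prop : Continuous fun θ : 𝕜 => ‖θ • v - w‖))
  rw [mem_sphere_zero_iff_norm] at hθ
  exact ⟨θ, hθ, fun θ' h' => hmin (mem_sphere_zero_iff_norm.mpr h')⟩

namespace SliceSubsetBall

variable {T : X →L[𝕜] Y} {x₀ c : X} {η η' ε ε' : ℝ}

theorem mono (h : SliceSubsetBall T x₀ η ε) (hε : ε ≤ ε') : SliceSubsetBall T x₀ η ε' :=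
  fun x hx hTx => (h x hx hTx).imp fun _ ⟨hθ, hlt⟩ => ⟨hθ, hlt.trans_le hε⟩

theorem of_norm_smul_sub_le (h : SliceSubsetBall T c η ε) {σ : 𝕜} (hσ : ‖σ‖ = 1)
    {δ : ℝ} (hc : ‖σ • c - x₀‖ ≤ δ) : SliceSubsetBall T x₀ η (ε + δ) := by
  intro x hx hTx
  obtain ⟨θ, hθ, hlt⟩ := h x hx hTx
  refine ⟨σ * θ, by rw [norm_mul, hσ, hθ, one_mul], ?_⟩
  calc ‖(σ * θ) • x - x₀‖ = ‖σ • (θ • x - c) + (σ • c - x₀)‖ := by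
        rw [smul_sub, mul_smul]; abel_nf
    _ ≤ ‖θ • x - c‖ + ‖σ • c - x₀‖ := by
        grw [norm_add_le, norm_smul, hσ, one_mul]
    _ < ε + δ := add_lt_add_of_lt_of_le hlt hc

theorem norm_lt (h : SliceSubsetBall T x₀ η ε) (hη : 0 < η) : ‖x₀‖ < 1 + ε := by
  obtain ⟨x, hx, hTx⟩ := exists_norm_le_one_lt_norm_apply T hη
  obtain ⟨θ, hθ, hlt⟩ := h x hx hTx
  calc ‖x₀‖ ≤ ‖θ • x‖ + ‖θ • x - x₀‖ := norm_le_norm_add_norm_sub _ _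
    _ < 1 + ε := by
        rw [norm_smul, hθ, one_mul]
        exact add_lt_add_of_le_of_lt hx hlt

theorem exists_unimodular_norm_sub_smul_lt (h : SliceSubsetBall T x₀ η ε)
    (h' : SliceSubsetBall T c η' ε') (hη : 0 < η) (hη' : 0 < η') :
    ∃ α : 𝕜, ‖α‖ = 1 ∧ ‖x₀ - α • c‖ < ε + ε' := by
  obtain ⟨x, hx, hTx⟩ := exists_norm_le_one_lt_norm_apply T (lt_min hη hη')
  obtain ⟨θ, hθ, hlt⟩ := h x hx (by linarith [min_le_left η η'])
  obtain ⟨θ', hθ', hlt'⟩ := h' x hx (by linarith [min_le_right η η'])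
  have hθ'0 : θ' ≠ 0 := by rintro rfl; simp at hθ'
  refine ⟨θ * θ'⁻¹, by rw [norm_mul, norm_inv, hθ, hθ', inv_one, one_mul], ?_⟩
  calc ‖x₀ - (θ * θ'⁻¹) • c‖ = ‖(θ * θ'⁻¹) • (θ' • x - c) - (θ • x - x₀)‖ := by
        rw [smul_sub, smul_smul, mul_assoc, inv_mul_cancel₀ hθ'0, mul_one]; abel_nf
    _ ≤ ‖θ' • x - c‖ + ‖θ • x - x₀‖ := by
        grw [norm_sub_le, norm_smul, norm_mul, norm_inv, hθ, hθ', inv_one, one_mul, one_mul]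
    _ < ε + ε' := by linarith

end SliceSubsetBall

theorem aeps_mono {ε ε' : ℝ} (hε : ε ≤ ε') : Aeps (𝕜 := 𝕜) (X := X) (Y := Y) ε ⊆ Aeps ε' :=
  fun _ hT =>
    let ⟨x₀, η, hη, hs⟩ := mem_aeps_iff.mp hT
    ⟨x₀, η, hη, hs.mono hε⟩

theorem absStronglyExposes_iff_forall_sliceSubsetBall {T : X →L[𝕜] Y} {x₀ : X} :
    AbsStronglyExposes T x₀ ↔ ∀ ε > 0, ∃ η > 0, SliceSubsetBall T x₀ η ε := by
  constructor
  · rintro ⟨-, hT⟩ ε hε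
    simp only [SliceSubsetBall]
    by_contra! hbad
    choose u hu hTu hfar using fun k : ℕ => hbad (1 / (k + 1)) Nat.one_div_pos_of_nat
    have hlim : Tendsto (fun k => ‖T (u k)‖) atTop (𝓝 ‖T‖) := by
      refine tendsto_of_tendsto_of_tendsto_of_le_of_le ?_ tendsto_const_nhds
        (fun k => (hTu k).le) (fun k => T.unit_le_opNorm _ (hu k))
      simpa using tendsto_const_nhds.sub (tendsto_one_div_add_atTop_nhds_zero_nat (𝕜 := ℝ))
    obtain ⟨θ, hθ, hθu⟩ := hT u hu hlim
    obtain ⟨k, hk⟩ := (hθu.eventually (Metric.ball_mem_nhds x₀ hε)).exists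
    exact (hfar k (θ k) (hθ k)).not_gt (by rwa [dist_eq_norm] at hk)
  · intro h
    refine ⟨le_of_forall_pos_lt_add fun ε hε => ?_, fun u hu hlim => ?_⟩
    · obtain ⟨η, hη, hT⟩ := h ε hε
      exact hT.norm_lt hη
    choose θ hθ hmin using fun k => exists_unimodular_forall_norm_smul_sub_le (𝕜 := 𝕜) (u k) x₀
    refine ⟨θ, hθ, Metric.tendsto_atTop.mpr fun ε hε => ?_⟩
    obtain ⟨η, hη, hT⟩ := h ε hε
    obtain ⟨N, hN⟩ := eventually_atTop.mp (hlim.eventually_const_lt (sub_lt_self ‖T‖ hη))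
    refine ⟨N, fun k hk => ?_⟩
    obtain ⟨θ', hθ', hlt⟩ := hT (u k) (hu k) (hN k hk)
    rw [dist_eq_norm]
    exact (hmin k θ' hθ').trans_lt hlt

end Slices

section Complete

variable {𝕜 X : Type} [RCLike 𝕜] [NormedAddCommGroup X] [NormedSpace 𝕜 X] [CompleteSpace X]

/-- The rotations are `σ j = α 0 ⋯ α (j - 1)`, which make `σ j • c j` Cauchy. -/
theorem exists_unimodular_norm_smul_sub_le_of_geometric {c : ℕ → X} {α : ℕ → 𝕜} {C r : ℝ}
    (hr : r < 1) (hα : ∀ j, ‖α j‖ = 1) (hc : ∀ j, ‖c j - α j • c (j + 1)‖ ≤ C * r ^ j) :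
    ∃ x₀ : X, ∃ σ : ℕ → 𝕜, (∀ j, ‖σ j‖ = 1) ∧ ∀ j, ‖σ j • c j - x₀‖ ≤ C * r ^ j / (1 - r) := by
  set σ : ℕ → 𝕜 := fun j => ∏ i ∈ Finset.range j, α i
  have hσ (j : ℕ) : ‖σ j‖ = 1 := by
    simp only [σ, norm_prod, hα, Finset.prod_const_one]
  have hz (j : ℕ) : dist (σ j • c j) (σ (j + 1) • c (j + 1)) ≤ C * r ^ j := by
    have hσsucc : σ (j + 1) = σ j * α j := Finset.prod_range_succ α j
    rw [dist_eq_norm, hσsucc, mul_smul, ← smul_sub, norm_smul, hσ, one_mul]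
    exact hc j
  obtain ⟨x₀, hx₀⟩ := cauchySeq_tendsto_of_complete (cauchySeq_of_le_geometric r C hr hz)
  refine ⟨x₀, σ, hσ, fun j => ?_⟩
  rw [← dist_eq_norm]
  exact dist_le_of_le_geometric_of_tendsto r C hr hz hx₀ j

variable {Y : Type} [NormedAddCommGroup Y] [NormedSpace 𝕜 Y]

theorem exists_absStronglyExposes_of_forall_mem_aeps {T : X →L[𝕜] Y}
    (h : ∀ ε > 0, T ∈ Aeps ε) : ∃ x₀, AbsStronglyExposes T x₀ := by
  choose c η hη hs using fun j : ℕ => mem_aeps_iff.mp (h ((1 / 2) ^ j) (by positivity))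
  choose α hα hc using fun j =>
    (hs j).exists_unimodular_norm_sub_smul_lt (hs (j + 1)) (hη j) (hη (j + 1))
  obtain ⟨x₀, σ, hσ, hx₀⟩ := exists_unimodular_norm_smul_sub_le_of_geometric (C := 3 / 2)
    (by norm_num : (1 / 2 : ℝ) < 1) hα fun j => (hc j).le.trans_eq (by ring)
  refine ⟨x₀, absStronglyExposes_iff_forall_sliceSubsetBall.mpr fun ε hε => ?_⟩
  obtain ⟨j, hj⟩ := exists_pow_lt_of_lt_one (by positivity : 0 < ε / 4)
    (by norm_num : (1 / 2 : ℝ) < 1)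
  refine ⟨η j, hη j, ((hs j).of_norm_smul_sub_le (hσ j) (hx₀ j)).mono ?_⟩
  linarith [show (1 / 2 : ℝ) ^ j + 3 / 2 * (1 / 2) ^ j / (1 - 1 / 2) = 4 * (1 / 2) ^ j by ring]

theorem setOf_absStronglyExposes_eq_iInter_aeps {r : ℕ → ℝ} (hr : ∀ n, 0 < r n)
    (hr0 : Tendsto r atTop (𝓝 0)) :
    {T : X →L[𝕜] Y | ∃ x₀, AbsStronglyExposes T x₀} = ⋂ n, Aeps (r n) := by
  ext T
  simp only [Set.mem_ofPred_eq, Set.mem_iInter]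
  constructor
  · rintro ⟨x₀, hT⟩ n
    obtain ⟨η, hη, hs⟩ := absStronglyExposes_iff_forall_sliceSubsetBall.mp hT (r n) (hr n)
    exact ⟨x₀, η, hη, hs⟩
  · intro hT
    refine exists_absStronglyExposes_of_forall_mem_aeps fun ε hε => ?_
    obtain ⟨n, hn⟩ := (hr0.eventually_lt_const hε).exists
    exact aeps_mono hn.le (hT n)

end Complete

theorem stmt2_general {𝕜 X Y : Type} [RCLike 𝕜]
    [NormedAddCommGroup X] [NormedSpace 𝕜 X] [CompleteSpace X]
    [NormedAddCommGroup Y] [NormedSpace 𝕜 Y] :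
    (∀ ε : ℝ, 0 < ε → IsOpen (Aeps (𝕜 := 𝕜) (X := X) (Y := Y) ε)) ∧
    (∀ r : ℕ → ℝ, (∀ n, 0 < r n) → Tendsto r atTop (𝓝 0) →
      {T : X →L[𝕜] Y | ∃ x₀, AbsStronglyExposes T x₀} = ⋂ n, Aeps (r n)) ∧
    IsGδ {T : X →L[𝕜] Y | ∃ x₀, AbsStronglyExposes T x₀} := by
  refine ⟨fun ε _ => isOpen_aeps ε, fun r => setOf_absStronglyExposes_eq_iInter_aeps, ?_⟩
  rw [setOf_absStronglyExposes_eq_iInter_aeps (fun n => by positivity)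
    (tendsto_pow_atTop_nhds_zero_of_lt_one (by norm_num) (by norm_num : (1 / 2 : ℝ) < 1))]
  exact .iInter fun n => (isOpen_aeps _).isGδ

theorem stmt2 {𝕜 X Y : Type} [RCLike 𝕜]
    [NormedAddCommGroup X] [NormedSpace 𝕜 X] [CompleteSpace X]
    [NormedAddCommGroup Y] [NormedSpace 𝕜 Y] [CompleteSpace Y] :
    (∀ ε : ℝ, 0 < ε → IsOpen (Aeps (𝕜 := 𝕜) (X := X) (Y := Y) ε)) ∧
    (∀ r : ℕ → ℝ, (∀ n, 0 < r n) → Tendsto r atTop (𝓝 0) →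
      {T : X →L[𝕜] Y | ∃ x₀, AbsStronglyExposes T x₀} = ⋂ n, Aeps (r n)) ∧
    IsGδ {T : X →L[𝕜] Y | ∃ x₀, AbsStronglyExposes T x₀} :=
  stmt2_general
end

section
/- Let X and Y be Banach spaces and T ∈ L(X,Y). Suppose T is an absolutely strongly exposing operator, absolutely strongly exposing B_X at x₀ with ‖T x₀‖ = ‖T‖, and let y* ∈ Y* with ‖y*‖ = 1 satisfy Re y*(T x₀) = ‖T‖. Then T* y* strongly exposes the unit ball B_X at x₀. -/
open Filter Topology RCLike Bornology

/-!
Write `f = T* g = g ∘ T`. Since `‖g‖ = 1`, `‖f‖ ≤ ‖T‖`, and `Re f(x₀) = ‖T‖` forces `‖f‖ = ‖T‖`.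
If `Re f(uₙ) → ‖T‖` on the unit ball then `‖T uₙ‖ → ‖T‖`, so `θₙ uₙ → x₀` for unimodular `θₙ`.
A scalar of modulus at most `M` whose real part tends to `M` tends to `M`, so both `f(uₙ)` and
`θₙ f(uₙ) = f(θₙ uₙ)` tend to `f(x₀) = ‖T‖`; when `T ≠ 0` this gives `θₙ → 1`, hence `uₙ → x₀`.
If `T = 0`, every sequence of the ball is absolutely exposed, so `x₀ = 0` and `‖uₙ‖ = ‖θₙ uₙ‖ → 0`.
-/

namespace RCLike

variable {𝕜 : Type*} [RCLike 𝕜]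

theorem norm_sub_ofReal_sq_le {z : 𝕜} {M : ℝ} (hz : ‖z‖ ≤ M) :
    ‖z - M‖ ^ 2 ≤ 2 * M * (M - re z) := by
  have hsub : ‖z - M‖ ^ 2 = (re z - M) * (re z - M) + im z * im z := by
    simpa using norm_sq_eq_def (z := z - M)
  have hz' : re z * re z + im z * im z ≤ M ^ 2 := by
    rw [← norm_sq_eq_def]
    exact pow_le_pow_left₀ (norm_nonneg z) hz 2
  nlinarith

theorem tendsto_ofReal_of_norm_le_of_tendsto_re {α : Type*} {l : Filter α} {a : α → 𝕜}
    {M : ℝ} (hle : ∀ i, ‖a i‖ ≤ M) (hre : Tendsto (fun i => re (a i)) l (𝓝 M)) :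
    Tendsto a l (𝓝 (M : 𝕜)) := by
  rw [tendsto_iff_norm_sub_tendsto_zero]
  have hbound : Tendsto (fun i => √(2 * M * (M - re (a i)))) l (𝓝 0) := by
    simpa using ((hre.const_sub M).const_mul (2 * M)).sqrt
  exact squeeze_zero (fun _ => norm_nonneg _)
    (fun i => Real.le_sqrt_of_sq_le (norm_sub_ofReal_sq_le (hle i))) hbound

end RCLike

theorem tendsto_one_of_tendsto_mul_of_tendsto {α G₀ : Type*} [GroupWithZero G₀]
    [TopologicalSpace G₀] [ContinuousInv₀ G₀] [ContinuousMul G₀] [T1Space G₀]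
    {l : Filter α} {θ a : α → G₀} {c : G₀}
    (hθa : Tendsto (fun i => θ i * a i) l (𝓝 c)) (ha : Tendsto a l (𝓝 c)) (hc : c ≠ 0) :
    Tendsto θ l (𝓝 1) := by
  have hdiv := hθa.div ha hc
  rw [div_self hc] at hdiv
  refine hdiv.congr' ?_
  filter_upwards [ha.eventually_ne hc] with i hi
  exact mul_div_cancel_right₀ (θ i) hi

theorem tendsto_of_tendsto_one_of_tendsto_smul {α G₀ X : Type*} [GroupWithZero G₀]
    [TopologicalSpace G₀] [ContinuousInv₀ G₀] [T1Space G₀] [TopologicalSpace X]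
    [MulAction G₀ X] [ContinuousSMul G₀ X] {l : Filter α} {θ : α → G₀} {u : α → X}
    {x : X}
    (hθ : Tendsto θ l (𝓝 1)) (hθu : Tendsto (fun i => θ i • u i) l (𝓝 x)) :
    Tendsto u l (𝓝 x) := by
  have hinv := (hθ.inv₀ one_ne_zero).smul hθu
  rw [inv_one, one_smul] at hinv
  refine hinv.congr' ?_
  filter_upwards [hθ.eventually_ne one_ne_zero] with i hi
  exact inv_smul_smul₀ hi (u i)

theorem ContinuousLinearMap.norm_eq_of_le_of_re_apply_eq {𝕜 X : Type*} [RCLike 𝕜]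
    [NormedAddCommGroup X] [NormedSpace 𝕜 X] {f : X →L[𝕜] 𝕜} {x₀ : X} {M : ℝ}
    (hle : ‖f‖ ≤ M) (hx₀ : ‖x₀‖ ≤ 1) (hre : re (f x₀) = M) : ‖f‖ = M :=
  le_antisymm hle <|
    calc M = re (f x₀) := hre.symm
      _ ≤ ‖f x₀‖ := re_le_norm _
      _ ≤ ‖f‖ * ‖x₀‖ := f.le_opNorm x₀
      _ ≤ ‖f‖ := mul_le_of_le_one_right (norm_nonneg f) hx₀

theorem AbsStronglyExposes.tendsto_of_norm_eq_zero {𝕜 X Y : Type} [RCLike 𝕜]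
    [NormedAddCommGroup X] [NormedSpace 𝕜 X] [NormedAddCommGroup Y] [NormedSpace 𝕜 Y]
    {T : X →L[𝕜] Y} {x₀ : X} (hT : AbsStronglyExposes T x₀) (hT0 : ‖T‖ = 0)
    {u : ℕ → X} (hu : ∀ n, ‖u n‖ ≤ 1) : Tendsto u atTop (𝓝 x₀) := by
  rw [norm_eq_zero] at hT0
  have hnorm (v : ℕ → X) : Tendsto (fun n => ‖T (v n)‖) atTop (𝓝 ‖T‖) := by
    simp [hT0]
  obtain ⟨_, -, hzero⟩ := hT.2 0 (by simp) (hnorm 0)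
  have hx₀ : x₀ = 0 := tendsto_nhds_unique hzero (by simp)
  obtain ⟨θ, hθ, hθu⟩ := hT.2 u hu (hnorm u)
  subst hx₀
  rw [tendsto_zero_iff_norm_tendsto_zero] at hθu ⊢
  simpa [norm_smul, hθ] using hθu

theorem stmt3_general {𝕜 X Y : Type} [RCLike 𝕜]
    [NormedAddCommGroup X] [NormedSpace 𝕜 X]
    [NormedAddCommGroup Y] [NormedSpace 𝕜 Y]
    (T : X →L[𝕜] Y) (x₀ : X) (hT : AbsStronglyExposes T x₀)
    (g : Y →L[𝕜] 𝕜) (hg : ‖g‖ = 1) (hre : re (g (T x₀)) = ‖T‖) :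
    StronglyExposesBall (g.comp T) x₀ := by
  set f := g.comp T
  have hre_le (x : X) : re (f x) ≤ ‖T x‖ :=
    (re_le_norm _).trans <| (g.le_opNorm (T x)).trans_eq <| by rw [hg, one_mul]
  have hf : ‖f‖ = ‖T‖ := f.norm_eq_of_le_of_re_apply_eq
    ((g.opNorm_comp_le T).trans_eq <| by rw [hg, one_mul]) hT.1 hre
  refine ⟨hT.1, hf ▸ hre, fun u hu hconv => ?_⟩
  rw [hf] at hconv
  rcases (norm_nonneg T).eq_or_lt with hT0 | hTpos
  · exact hT.tendsto_of_norm_eq_zero hT0.symm hu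
  have hf_le (x : X) (hx : ‖x‖ ≤ 1) : ‖f x‖ ≤ ‖T‖ :=
    hf ▸ f.le_opNorm_of_le hx |>.trans_eq (mul_one _)
  have hTu : Tendsto (fun n => ‖T (u n)‖) atTop (𝓝 ‖T‖) :=
    tendsto_of_tendsto_of_tendsto_of_le_of_le hconv tendsto_const_nhds (fun n => hre_le (u n))
      fun n => (T.le_opNorm_of_le (hu n)).trans_eq (mul_one _)
  obtain ⟨θ, -, hθu⟩ := hT.2 u hu hTu
  have hfx₀ : f x₀ = (‖T‖ : 𝕜) := by
    rw [← hre]; exact (re_eq_self_of_le (hre ▸ hf_le x₀ hT.1)).symm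
  have hfu := tendsto_ofReal_of_norm_le_of_tendsto_re (fun n => hf_le (u n) (hu n)) hconv
  have hθfu : Tendsto (fun n => θ n * f (u n)) atTop (𝓝 (‖T‖ : 𝕜)) := by
    simpa [Function.comp_def, hfx₀] using (f.continuous.tendsto x₀).comp hθu
  exact tendsto_of_tendsto_one_of_tendsto_smul
    (tendsto_one_of_tendsto_mul_of_tendsto hθfu hfu (ofReal_ne_zero.2 hTpos.ne')) hθu

theorem stmt3 {𝕜 X Y : Type} [RCLike 𝕜]
    [NormedAddCommGroup X] [NormedSpace 𝕜 X] [CompleteSpace X]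
    [NormedAddCommGroup Y] [NormedSpace 𝕜 Y] [CompleteSpace Y]
    (T : X →L[𝕜] Y) (x₀ : X) (hT : AbsStronglyExposes T x₀) (hmax : ‖T x₀‖ = ‖T‖)
    (g : Y →L[𝕜] 𝕜) (hg : ‖g‖ = 1) (hre : re (g (T x₀)) = ‖T‖) :
    StronglyExposesBall (g.comp T) x₀ :=
  stmt3_general T x₀ hT g hg hre
end

section
/- Let X and Y be Banach spaces and suppose that the set NA(X,Y) of norm attaining operators is residual in L(X,Y) (contains a dense Gδ set). Then for every sequence {Sₙ} in L(X,Y) and every ε > 0, there exists T ∈ L(X,Y) with ‖T‖ < ε such that T + Sₙ ∈ NA(X,Y) for every n ∈ ℕ. In particular, every operator in L(X,Y) is the difference of two norm attaining operators. -/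
open Filter Topology RCLike Bornology

lemma my_isGδ_preimage {α β : Type} [TopologicalSpace α] [TopologicalSpace β] {f : α → β}
    (hf : Continuous f) {s : Set β} (hs : IsGδ s) : IsGδ (f ⁻¹' s) := by
  obtain ⟨T, hTo, hTc, rfl⟩ := hs
  rw [Set.sInter_eq_biInter, Set.preimage_iInter₂]
  exact IsGδ.biInter hTc fun t ht => ((hTo t ht).preimage hf).isGδ

theorem stmt7 {𝕜 X Y : Type} [RCLike 𝕜]
    [NormedAddCommGroup X] [NormedSpace 𝕜 X] [CompleteSpace X]
    [NormedAddCommGroup Y] [NormedSpace 𝕜 Y] [CompleteSpace Y]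
    (hres : ∃ G : Set (X →L[𝕜] Y),
      G ⊆ {T | ∃ x, ‖x‖ = 1 ∧ ‖T x‖ = ‖T‖} ∧ IsGδ G ∧ Dense G) :
    (∀ (S : ℕ → (X →L[𝕜] Y)) (ε : ℝ), 0 < ε →
      ∃ T : X →L[𝕜] Y, ‖T‖ < ε ∧ ∀ n, ∃ x, ‖x‖ = 1 ∧ ‖(T + S n) x‖ = ‖T + S n‖) ∧
    (∀ R : X →L[𝕜] Y, ∃ T₁ T₂ : X →L[𝕜] Y,
      (∃ x, ‖x‖ = 1 ∧ ‖T₁ x‖ = ‖T₁‖) ∧ (∃ x, ‖x‖ = 1 ∧ ‖T₂ x‖ = ‖T₂‖) ∧ R = T₁ - T₂) := by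

  obtain ⟨G, hG, hGδ, hGd⟩ := hres
  have main : ∀ (S : ℕ → (X →L[𝕜] Y)) (ε : ℝ), 0 < ε →
      ∃ T : X →L[𝕜] Y, ‖T‖ < ε ∧ ∀ n, T + S n ∈ G := by
    intro S ε hε
    set Gn : ℕ → Set (X →L[𝕜] Y) := fun n => (fun T => T + S n) ⁻¹' G with hGn
    have hGnδ : ∀ n, IsGδ (Gn n) := fun n =>
      my_isGδ_preimage (continuous_id.add continuous_const) hGδ
    have hGnd : ∀ n, Dense (Gn n) := by
      intro n
      have : Gn n = (Homeomorph.addRight (S n)) ⁻¹' G := rfl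
      rw [this]
      exact hGd.preimage (Homeomorph.addRight (S n)).isOpenMap
    have hdense : Dense (⋂ n, Gn n) := dense_iInter_of_Gδ hGnδ hGnd
    obtain ⟨T, hT1, hT2⟩ := hdense.exists_mem_open Metric.isOpen_ball
      ⟨0, Metric.mem_ball_self hε⟩
    refine ⟨T, ?_, fun n => Set.mem_iInter.mp hT1 n⟩
    simpa [dist_eq_norm] using hT2
  constructor
  · intro S ε hε
    obtain ⟨T, h1, h2⟩ := main S ε hε
    exact ⟨T, h1, fun n => hG (h2 n)⟩
  · intro R
    obtain ⟨T, _, h2⟩ := main (fun n => if n = 0 then 0 else R) 1 one_pos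
    refine ⟨T + R, T, hG ?_, hG ?_, by abel⟩
    · simpa using h2 1
    · simpa using h2 0
end

section
/- Let Z and W be Banach spaces, let I be a closed subspace of L(Z,W), and let {zₙ} be a sequence in the unit sphere of Z such that for every n the evaluation map Φₙ : I → W, Φₙ(T) = T(zₙ), is surjective. Then for every residual subset D of W, the set B = {T ∈ I : T(zₙ) ∈ D for all n ∈ ℕ} is residual in I. -/
/-!
Each evaluation map `T ↦ T zₙ` on `I` is a surjective bounded operator between Banach spaces,
hence open by the open mapping theorem, so it pulls a dense Gδ subset of `W` back to a dense Gδ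
subset of `I`. The countable intersection of these preimages is again a dense Gδ because `I`,
being closed in the Banach space `L(Z, W)`, is a Baire space.
-/

open Filter Topology RCLike Bornology

theorem isGδ_iInter_preimage_and_dense {X Y ι : Type*} [TopologicalSpace X] [BaireSpace X]
    [TopologicalSpace Y] [Countable ι] {f : ι → X → Y} (hcont : ∀ i, Continuous (f i))
    (hopen : ∀ i, IsOpenMap (f i)) {G : Set Y} (hGδ : IsGδ G) (hdense : Dense G) :
    IsGδ (⋂ i, f i ⁻¹' G) ∧ Dense (⋂ i, f i ⁻¹' G) :=
  have hpre : ∀ i, IsGδ (f i ⁻¹' G) := fun i => hGδ.preimage (hcont i)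
  ⟨.iInter hpre, dense_iInter_of_Gδ hpre fun i => hdense.preimage (hopen i)⟩

section Evaluation

variable {𝕜 Z W : Type*} [RCLike 𝕜] [NormedAddCommGroup Z] [NormedSpace 𝕜 Z]
  [NormedAddCommGroup W] [NormedSpace 𝕜 W]

noncomputable def Submodule.evalL (I : Submodule 𝕜 (Z →L[𝕜] W)) (z : Z) : I →L[𝕜] W :=
  (ContinuousLinearMap.apply 𝕜 W z).comp I.subtypeL

theorem Submodule.isOpenMap_evalL [CompleteSpace W] {I : Submodule 𝕜 (Z →L[𝕜] W)}
    (hI : IsClosed (I : Set (Z →L[𝕜] W))) {z : Z} (hsurj : ∀ w : W, ∃ T ∈ I, T z = w) :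
    IsOpenMap (I.evalL z) := by
  have : CompleteSpace I := hI.completeSpace_coe
  refine ContinuousLinearMap.isOpenMap (σ := RingHom.id 𝕜) (E := I) (I.evalL z) fun w => ?_
  obtain ⟨T, hT, rfl⟩ := hsurj w
  exact ⟨⟨T, hT⟩, rfl⟩

end Evaluation

theorem stmt9_general {𝕜 Z W : Type} [RCLike 𝕜]
    [NormedAddCommGroup Z] [NormedSpace 𝕜 Z]
    [NormedAddCommGroup W] [NormedSpace 𝕜 W] [CompleteSpace W]
    (I : Submodule 𝕜 (Z →L[𝕜] W)) (hI : IsClosed (I : Set (Z →L[𝕜] W)))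
    (z : ℕ → Z)
    (hsurj : ∀ (n : ℕ) (w : W), ∃ T ∈ I, T (z n) = w)
    (D : Set W) (hD : ∃ G ⊆ D, IsGδ G ∧ Dense G) :
    ∃ G : Set I, (∀ S ∈ G, ∀ n, (S : Z →L[𝕜] W) (z n) ∈ D) ∧ IsGδ G ∧ Dense G := by
  obtain ⟨G, hGD, hGδ, hdense⟩ := hD
  have : CompleteSpace I := hI.completeSpace_coe
  refine ⟨⋂ n, I.evalL (z n) ⁻¹' G, fun S hS n => hGD (Set.mem_iInter.1 hS n), ?_⟩
  exact isGδ_iInter_preimage_and_dense (fun n => (I.evalL (z n)).continuous)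
    (fun n => I.isOpenMap_evalL hI (hsurj n)) hGδ hdense

theorem stmt9 {𝕜 Z W : Type} [RCLike 𝕜]
    [NormedAddCommGroup Z] [NormedSpace 𝕜 Z] [CompleteSpace Z]
    [NormedAddCommGroup W] [NormedSpace 𝕜 W] [CompleteSpace W]
    (I : Submodule 𝕜 (Z →L[𝕜] W)) (hI : IsClosed (I : Set (Z →L[𝕜] W)))
    (z : ℕ → Z) (hz : ∀ n, ‖z n‖ = 1)
    (hsurj : ∀ (n : ℕ) (w : W), ∃ T ∈ I, T (z n) = w)
    (D : Set W) (hD : ∃ G ⊆ D, IsGδ G ∧ Dense G) :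
    ∃ G : Set I, (∀ S ∈ G, ∀ n, (S : Z →L[𝕜] W) (z n) ∈ D) ∧ IsGδ G ∧ Dense G :=
  stmt9_general I hI z hsurj D hD
end

section
/- Let X be a Banach space such that every point of the unit sphere S_X is a strongly exposed point of B_X. Then the set {(x, x*) ∈ strexp(B_X) × SE(X) : ‖x*‖ = x*(x) = 1} is dense in Π(X) = {(x, x*) ∈ S_X × S_{X*} : x*(x) = 1}. In particular X has property [P]: for every ε ∈ (0,1) there is η > 0 such that whenever x ∈ S_X, x* ∈ S_{X*} satisfy Re x*(x) > 1 − η, there exist y ∈ S_X and a strongly exposing functional y* ∈ SE(X) with ‖y*‖ = y*(y) = 1, ‖y* − x*‖ < ε, and ‖y − x‖ < ε. -/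
/-
Given a norm-attaining pair `(y, g)` and a functional `h` strongly exposing the unit ball at `y`,
the functional `g + t h` (`t > 0` small) still attains its norm at `y` and strongly exposes the
ball there: on a sequence of the ball where `re (g + t h)` tends to its maximum, `re h` must tend
to `‖h‖`. This perturbs every norm-attaining pair to a strongly exposing one.

For property [P] one first moves an almost norm-attaining pair to a norm-attaining one
(Bishop–Phelps–Bollobás). Ekeland's variational principle, applied to `re f` on the unit ball,
gives a point `y` such that `y + K` misses the ball, where `K = {w | k ‖w‖ < re (f w)}` is an open
convex cone. A functional separating `y + K` from the ball attains its norm at `y`, and since it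
is positive on `K`, Phelps' estimate puts it within `2k + (1 - re (f y))` of `f`.
-/

open Filter Topology RCLike Bornology

section Ekeland

variable {α : Type*} [MetricSpace α] {φ : α → ℝ} {k : ℝ}

def bishopPhelpsSet (φ : α → ℝ) (k : ℝ) (w : α) : Set α := {z | φ w + k * dist z w ≤ φ z}

theorem mem_bishopPhelpsSet {w z : α} : z ∈ bishopPhelpsSet φ k w ↔ φ w + k * dist z w ≤ φ z :=
  Iff.rfl

theorem self_mem_bishopPhelpsSet (w : α) : w ∈ bishopPhelpsSet φ k w := by
  simp [mem_bishopPhelpsSet]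

theorem bishopPhelpsSet_subset (hk : 0 ≤ k) {w w' : α} (h : w' ∈ bishopPhelpsSet φ k w) :
    bishopPhelpsSet φ k w' ⊆ bishopPhelpsSet φ k w := by
  intro z hz
  have := mul_le_mul_of_nonneg_left (dist_triangle z w' w) hk
  rw [mem_bishopPhelpsSet] at h hz ⊢
  linarith

theorem isClosed_bishopPhelpsSet (hφ : Continuous φ) (w : α) :
    IsClosed (bishopPhelpsSet φ k w) :=
  isClosed_le (by fun_prop) hφ

theorem exists_mem_bishopPhelpsSet_forall_dist_le (hbdd : BddAbove (Set.range φ)) (hk : 0 < k)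
    (w : α) {ε : ℝ} (hε : 0 < ε) :
    ∃ w' ∈ bishopPhelpsSet φ k w, ∀ z ∈ bishopPhelpsSet φ k w', dist z w' ≤ ε := by
  set S := bishopPhelpsSet φ k w
  have hne : (φ '' S).Nonempty := ⟨_, w, self_mem_bishopPhelpsSet w, rfl⟩
  obtain ⟨_, ⟨w', hw', rfl⟩, hlt⟩ := exists_lt_of_lt_csSup hne (sub_lt_self _ (mul_pos hk hε))
  refine ⟨w', hw', fun z hz => le_of_mul_le_mul_left ?_ hk⟩
  have hzS : φ z ≤ sSup (φ '' S) :=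
    le_csSup (hbdd.mono (Set.image_subset_range _ _)) ⟨z, bishopPhelpsSet_subset hk.le hw' hz, rfl⟩
  rw [mem_bishopPhelpsSet] at hz
  linarith

theorem exists_ekeland_point [CompleteSpace α] (hφ : Continuous φ) (hbdd : BddAbove (Set.range φ))
    (hk : 0 < k) (x : α) :
    ∃ y, φ x + k * dist y x ≤ φ y ∧ ∀ z, φ z ≤ φ y + k * dist z y := by
  choose step hstep_mem hstep_dist using fun (n : ℕ) w =>
    exists_mem_bishopPhelpsSet_forall_dist_le hbdd hk w (Nat.one_div_pos_of_nat (n := n))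
  let y : ℕ → α := fun n => Nat.rec (step 0 x) (fun n w => step (n + 1) w) n
  have hdist : ∀ n, ∀ z ∈ bishopPhelpsSet φ k (y n), dist z (y n) ≤ 1 / (n + 1) := by
    rintro (_ | n) <;> exact hstep_dist _ _
  have hanti : Antitone fun n => bishopPhelpsSet φ k (y n) :=
    antitone_nat_of_succ_le fun n => bishopPhelpsSet_subset hk.le (hstep_mem _ _)
  have hcauchy : CauchySeq y := cauchySeq_of_le_tendsto_0' (fun n : ℕ => 1 / ((n : ℝ) + 1))
    (fun n m hnm => by
      rw [dist_comm]; exact hdist n _ (hanti hnm (self_mem_bishopPhelpsSet _)))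
    tendsto_one_div_add_atTop_nhds_zero_nat
  obtain ⟨y₀, hlim⟩ := cauchySeq_tendsto_of_complete hcauchy
  have hmem : ∀ n, y₀ ∈ bishopPhelpsSet φ k (y n) := fun n =>
    (isClosed_bishopPhelpsSet hφ _).mem_of_tendsto hlim
      (eventually_atTop.2 ⟨n, fun m hm => hanti hm (self_mem_bishopPhelpsSet _)⟩)
  refine ⟨y₀, bishopPhelpsSet_subset hk.le (hstep_mem 0 x) (hmem 0), fun z => ?_⟩
  by_contra! hz
  have hzy : Tendsto y atTop (𝓝 z) := tendsto_iff_dist_tendsto_zero.2 <|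
    squeeze_zero (fun _ => dist_nonneg)
      (fun n => by
        rw [dist_comm]; exact hdist n z (bishopPhelpsSet_subset hk.le (hmem n) hz.le))
      tendsto_one_div_add_atTop_nhds_zero_nat
  rw [tendsto_nhds_unique hlim hzy, dist_self, mul_zero, add_zero] at hz
  exact lt_irrefl _ hz

end Ekeland

theorem RCLike.eq_one_of_norm_le_one_of_one_le_re {𝕜 : Type*} [RCLike 𝕜] {z : 𝕜} (h₁ : ‖z‖ ≤ 1)
    (h₂ : 1 ≤ re z) : z = 1 := by
  have hz : ‖z‖ = 1 := le_antisymm h₁ (h₂.trans (re_le_norm z))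
  calc z = ‖z‖ := norm_le_re_iff_eq_norm.1 (by rwa [hz])
    _ = 1 := by rw [hz, ofReal_one]

theorem exists_pos_on_cone_of_forall_lt_norm_add {E : Type*} [NormedAddCommGroup E]
    [NormedSpace ℝ E] (K : ConvexCone ℝ E) (hKo : IsOpen (K : Set E)) (hKne : (K : Set E).Nonempty)
    {y : E} (hy : ‖y‖ ≤ 1) (hK : ∀ w ∈ K, 1 < ‖y + w‖) :
    ∃ r : E →L[ℝ] ℝ, (∀ w ∈ K, 0 < r w) ∧ ∀ b, ‖b‖ ≤ 1 → r b ≤ r y := by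
  -- separate `K` from the translate `closedBall (-y) 1` of the unit ball
  obtain ⟨p, u, hpK, hpB⟩ := geometric_hahn_banach_open K.convex hKo (convex_closedBall (-y) 1)
    (Set.disjoint_left.2 fun w hw hwB =>
      (hK w hw).not_ge (by simpa [dist_eq_norm, add_comm] using hwB))
  have hu : u ≤ 0 := by simpa using hpB 0 (by simpa using hy)
  -- if `u < 0`, rescaling a point of the cone `K` would reach the level `p = u`
  have hu0 : 0 ≤ u := by
    by_contra! hneg
    obtain ⟨w, hw⟩ := hKne
    have hpw : p w < 0 := (hpK w hw).trans hneg
    have := hpK _ (K.smul_mem (div_pos_of_neg_of_neg hneg hpw) hw)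
    rw [map_smul, smul_eq_mul, div_mul_cancel₀ _ hpw.ne] at this
    exact lt_irrefl _ this
  refine ⟨-p, fun w hw => by simpa using (hpK w hw).trans_le hu, fun b hb => ?_⟩
  have := hpB (b - y) (by simpa [dist_eq_norm] using hb)
  simp only [neg_apply, map_sub] at this ⊢
  linarith

namespace ContinuousLinearMap

variable {𝕜 X : Type*} [RCLike 𝕜] [NormedAddCommGroup X] [NormedSpace 𝕜 X]

theorem re_apply_le_opNorm (f : X →L[𝕜] 𝕜) {z : X} (hz : ‖z‖ ≤ 1) : re (f z) ≤ ‖f‖ :=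
  (re_le_norm _).trans ((f.le_opNorm_of_le hz).trans_eq (mul_one _))

theorem opNorm_le_of_re_le {f : X →L[𝕜] 𝕜} {C : ℝ} (hC : 0 ≤ C)
    (h : ∀ z, ‖z‖ ≤ 1 → re (f z) ≤ C) : ‖f‖ ≤ C := by
  refine opNorm_le_of_unit_norm hC fun z hz => ?_
  rcases eq_or_ne (f z) 0 with h0 | h0
  · simpa [h0] using hC
  -- rotating `z` by a unimodular scalar makes `f z` real and nonnegative
  set θ : 𝕜 := (‖f z‖ : 𝕜) / f z
  have hθ : ‖θ‖ = 1 := by simp [θ, div_self (norm_ne_zero_iff.2 h0)]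
  have hfθ : f (θ • z) = ‖f z‖ := by simp [θ, div_mul_cancel₀ _ h0]
  simpa [hfθ] using h (θ • z) (by rw [norm_smul, hθ, hz, one_mul])

theorem norm_ofReal_inv_norm_smul {x : X} (hx : x ≠ 0) : ‖((‖x‖⁻¹ : ℝ) : 𝕜) • x‖ = 1 := by
  rw [ofReal_inv]
  exact norm_smul_inv_norm hx

theorem ofReal_inv_norm_smul_apply_eq_one {F : X →L[𝕜] 𝕜} {y : X}
    (hy : ‖y‖ ≤ 1) (hFy : re (F y) = ‖F‖) (hF : F ≠ 0) : (((‖F‖⁻¹ : ℝ) : 𝕜) • F) y = 1 := by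
  refine eq_one_of_norm_le_one_of_one_le_re ?_ ?_
  · calc _ ≤ ‖((‖F‖⁻¹ : ℝ) : 𝕜) • F‖ * 1 := le_opNorm_of_le _ hy
      _ = 1 := by rw [norm_ofReal_inv_norm_smul hF, one_mul]
  · rw [smul_apply, smul_eq_mul, re_ofReal_mul, hFy, inv_mul_cancel₀ (norm_ne_zero_iff.2 hF)]

theorem norm_sub_le_of_re_pos_of_lt_re {f g : X →L[𝕜] 𝕜} {y : X} {k : ℝ} (hk : 0 ≤ k)
    (hg : ‖g‖ ≤ 1) (hy : ‖y‖ ≤ 1) (hgy : g y = 1)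
    (hfg : ∀ w, k * ‖w‖ < re (f w) → 0 < re (g w)) :
    ‖f - g‖ ≤ 2 * k + |1 - re (f y)| := by
  refine opNorm_le_of_re_le (by positivity) fun z hz => ?_
  -- split `z` along `y` and the real kernel of `g`
  set t := re (g z)
  set v := z - (t : 𝕜) • y
  have ht : |t| ≤ 1 :=
    (abs_re_le_norm _).trans <| (g.le_opNorm_of_le hz).trans (by nlinarith [norm_nonneg g])
  have hgv : re (g v) = 0 := by simp [v, t, hgy]
  have hfv : re (f v) ≤ k * ‖v‖ := by
    by_contra! h
    exact (hfg v h).ne' hgv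
  have hv : ‖v‖ ≤ 2 := by
    calc ‖v‖ ≤ ‖z‖ + |t| * ‖y‖ := by simpa [v, norm_smul] using norm_sub_le z ((t : 𝕜) • y)
      _ ≤ 1 + 1 * 1 := by gcongr
      _ = 2 := by norm_num
  have hsplit : re ((f - g) z) = re (f v) - t * (1 - re (f y)) := by
    rw [sub_apply, map_sub, map_sub, map_smul, smul_eq_mul, map_sub, re_ofReal_mul]
    ring
  have htc : -(t * (1 - re (f y))) ≤ |1 - re (f y)| := by
    calc -(t * (1 - re (f y))) ≤ |t| * |1 - re (f y)| := by rw [← abs_mul]; exact neg_le_abs _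
      _ ≤ 1 * |1 - re (f y)| := by gcongr
      _ = |1 - re (f y)| := one_mul _
  linarith [mul_le_mul_of_nonneg_left hv hk]

section ReLtCone

variable [NormedSpace ℝ X] [IsScalarTower ℝ 𝕜 X] (f : X →L[𝕜] 𝕜) {k : ℝ} (hk : 0 ≤ k)

def reLtCone : ConvexCone ℝ X where
  carrier := {w | k * ‖w‖ < re (f w)}
  smul_mem' c hc w hw := by
    change k * ‖c • w‖ < re (f (c • w))
    rw [f.map_smul_of_tower, smul_re, norm_smul, Real.norm_of_nonneg hc.le, mul_left_comm]
    exact mul_lt_mul_of_pos_left hw hc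
  add_mem' a ha b hb := by
    change k * ‖a + b‖ < re (f (a + b))
    have := mul_le_mul_of_nonneg_left (norm_add_le a b) hk
    rw [map_add, map_add]
    exact this.trans_lt (by linarith [ha.out, hb.out])

theorem mem_reLtCone {w : X} : w ∈ f.reLtCone hk ↔ k * ‖w‖ < re (f w) := Iff.rfl

theorem isOpen_reLtCone : IsOpen (f.reLtCone hk : Set X) :=
  isOpen_lt (g := fun w => re (f w)) (by fun_prop) (by fun_prop)

theorem reLtCone_nonempty (hkf : k < ‖f‖) : (f.reLtCone hk : Set X).Nonempty := by
  by_contra! h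
  refine hkf.not_ge (f.opNorm_le_of_re_le hk fun z hz => ?_)
  have hz' : ¬ z ∈ f.reLtCone hk := fun hz' => (h ▸ hz' : z ∈ (∅ : Set X))
  rw [mem_reLtCone, not_lt] at hz'
  exact hz'.trans (mul_le_of_le_one_right hk hz)

end ReLtCone

end ContinuousLinearMap

namespace StronglyExposesBall

variable {𝕜 X : Type} [RCLike 𝕜] [NormedAddCommGroup X] [NormedSpace 𝕜 X]
  {f g : X →L[𝕜] 𝕜} {y : X}

theorem ne_zero (hf : StronglyExposesBall f y) (hy : y ≠ 0) : f ≠ 0 := by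
  rintro rfl
  have h0 : Tendsto (fun _ : ℕ => (0 : X)) atTop (𝓝 y) := hf.2.2 _ (by simp) (by simp)
  exact hy (tendsto_nhds_unique tendsto_const_nhds h0).symm

theorem ofReal_smul (hf : StronglyExposesBall f y) {c : ℝ} (hc : 0 < c) :
    StronglyExposesBall ((c : 𝕜) • f) y := by
  have hre : ∀ z, re (((c : 𝕜) • f) z) = c * re (f z) := fun z => by
    rw [smul_apply, smul_eq_mul, re_ofReal_mul]
  have hnorm : ‖(c : 𝕜) • f‖ = c * ‖f‖ := by rw [norm_smul, norm_ofReal, abs_of_pos hc]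
  refine ⟨hf.1, by rw [hre, hf.2.1, hnorm], fun u hu hlim => hf.2.2 u hu ?_⟩
  simp only [hre, hnorm] at hlim
  simpa [inv_mul_cancel_left₀ hc.ne'] using hlim.const_mul c⁻¹

theorem add (hf : StronglyExposesBall f y) (hg : re (g y) = ‖g‖) :
    StronglyExposesBall (g + f) y := by
  have hnorm : ‖g + f‖ = ‖g‖ + ‖f‖ := by
    refine le_antisymm (norm_add_le g f) ?_
    calc ‖g‖ + ‖f‖ = re ((g + f) y) := by simp [hg, hf.2.1]
      _ ≤ ‖g + f‖ := (g + f).re_apply_le_opNorm hf.1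
  refine ⟨hf.1, by simp [hnorm, hg, hf.2.1], fun u hu hlim => hf.2.2 u hu ?_⟩
  -- `re g ≤ ‖g‖` and `re f ≤ ‖f‖` on the ball, so the sum can only tend to `‖g‖ + ‖f‖` if both do
  rw [hnorm] at hlim
  refine tendsto_of_tendsto_of_tendsto_of_le_of_le (by simpa using hlim.sub_const ‖g‖)
    tendsto_const_nhds (fun n => ?_) (fun n => f.re_apply_le_opNorm (hu n))
  linarith [g.re_apply_le_opNorm (hu n)]

end StronglyExposesBall

section Perturbation

variable {𝕜 X : Type} [RCLike 𝕜] [NormedAddCommGroup X] [NormedSpace 𝕜 X]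

open ContinuousLinearMap

theorem exists_stronglyExposesBall_near {g h : X →L[𝕜] 𝕜} {y : X} (hh : StronglyExposesBall h y)
    (hg : ‖g‖ = 1) (hgy : g y = 1) {δ : ℝ} (hδ : 0 < δ) :
    ∃ g' : X →L[𝕜] 𝕜, StronglyExposesBall g' y ∧ ‖g'‖ = 1 ∧ g' y = 1 ∧ ‖g' - g‖ ≤ 2 * δ := by
  have hh0 : 0 < ‖h‖ := norm_pos_iff.2 (hh.ne_zero (by rintro rfl; simp at hgy))
  set t := δ / ‖h‖
  set F := g + (t : 𝕜) • h
  have hF : StronglyExposesBall F y :=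
    (hh.ofReal_smul (div_pos hδ hh0)).add (by simp [hgy, hg])
  have hFnorm : ‖F‖ = 1 + δ := by
    rw [← hF.2.1, add_apply, smul_apply, smul_eq_mul, map_add, re_ofReal_mul, hh.2.1, hgy, one_re,
      div_mul_cancel₀ _ hh0.ne']
  have hF0 : F ≠ 0 := norm_ne_zero_iff.1 (by rw [hFnorm]; positivity)
  set g' := ((‖F‖⁻¹ : ℝ) : 𝕜) • F
  have hg' : ‖g'‖ = 1 := norm_ofReal_inv_norm_smul hF0
  refine ⟨g', hF.ofReal_smul (inv_pos.2 (norm_pos_iff.2 hF0)), hg',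
    ofReal_inv_norm_smul_apply_eq_one hF.1 hF.2.1 hF0, ?_⟩
  have hFg' : g + (t : 𝕜) • h = g' + (δ : 𝕜) • g' := by
    calc F = ((‖F‖ : ℝ) : 𝕜) • g' := by
          rw [smul_smul, ← ofReal_mul, mul_inv_cancel₀ (norm_ne_zero_iff.2 hF0), ofReal_one,
            one_smul]
      _ = g' + (δ : 𝕜) • g' := by rw [hFnorm, ofReal_add, ofReal_one]; module
  have hdiff : g' - g = (t : 𝕜) • h - (δ : 𝕜) • g' := by
    rw [sub_eq_sub_iff_add_eq_add, ← hFg', add_comm]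
  calc ‖g' - g‖ ≤ ‖(t : 𝕜) • h‖ + ‖(δ : 𝕜) • g'‖ := hdiff ▸ norm_sub_le _ _
    _ = 2 * δ := by
      rw [norm_smul, norm_smul, hg', norm_ofReal, norm_ofReal, abs_of_pos hδ,
        abs_of_pos (div_pos hδ hh0), div_mul_cancel₀ _ hh0.ne']
      ring

end Perturbation

section BishopPhelpsBollobas

variable {𝕜 X : Type*} [RCLike 𝕜] [NormedAddCommGroup X] [NormedSpace 𝕜 X] [CompleteSpace X]

open ContinuousLinearMap

theorem exists_ekeland_point_re_closedBall (f : X →L[𝕜] 𝕜) {x : X} (hx : ‖x‖ ≤ 1) {k : ℝ}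
    (hk : 0 < k) :
    ∃ y : X, ‖y‖ ≤ 1 ∧ re (f x) + k * ‖y - x‖ ≤ re (f y) ∧
      ∀ z : X, ‖z‖ ≤ 1 → re (f z) ≤ re (f y) + k * ‖z - y‖ := by
  have : CompleteSpace (Metric.closedBall (0 : X) 1) := Metric.isClosed_closedBall.completeSpace_coe
  obtain ⟨⟨y, hy⟩, hyx, hmax⟩ := exists_ekeland_point
    (φ := fun z : Metric.closedBall (0 : X) 1 => re (f z)) (by fun_prop)
    ⟨‖f‖, by rintro _ ⟨⟨z, hz⟩, rfl⟩; exact f.re_apply_le_opNorm (mem_closedBall_zero_iff.1 hz)⟩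
    hk ⟨x, mem_closedBall_zero_iff.2 hx⟩
  refine ⟨y, mem_closedBall_zero_iff.1 hy, by simpa [Subtype.dist_eq, dist_eq_norm] using hyx,
    fun z hz => ?_⟩
  simpa [Subtype.dist_eq, dist_eq_norm] using hmax ⟨z, mem_closedBall_zero_iff.2 hz⟩

theorem exists_norming_pair_near {f : X →L[𝕜] 𝕜} (hf : ‖f‖ = 1) {x : X} (hx : ‖x‖ ≤ 1)
    {k η : ℝ} (hk : 0 < k) (hk1 : k < 1) (hfx : 1 - η < re (f x)) :
    ∃ (y : X) (g : X →L[𝕜] 𝕜), ‖y‖ = 1 ∧ ‖g‖ = 1 ∧ g y = 1 ∧ k * ‖y - x‖ < η ∧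
      ‖g - f‖ < 2 * k + η := by
  obtain ⟨y, hy, hyx, hmax⟩ := exists_ekeland_point_re_closedBall f hx hk
  let : Module ℝ X := RestrictScalars.module ℝ 𝕜 X
  have : IsScalarTower ℝ 𝕜 X := RestrictScalars.isScalarTower ℝ 𝕜 X
  let : NormedSpace ℝ X := NormedSpace.restrictScalars ℝ 𝕜 X
  have hKne := f.reLtCone_nonempty hk.le (hf ▸ hk1)
  obtain ⟨r, hrK, hrmax⟩ := exists_pos_on_cone_of_forall_lt_norm_add _ (f.isOpen_reLtCone hk.le)
    hKne hy fun w hw => by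
      by_contra! hw'
      have := hmax (y + w) hw'
      rw [map_add, map_add, add_sub_cancel_left] at this
      exact ((f.mem_reLtCone hk.le).1 hw).not_ge (by linarith)
  set g₀ : X →L[𝕜] 𝕜 := StrongDual.extendRCLike r
  have hre : ∀ z, re (g₀ z) = r z := StrongDual.re_extendRCLike_apply r
  have hg₀y : re (g₀ y) = ‖g₀‖ := by
    refine le_antisymm (g₀.re_apply_le_opNorm hy) (g₀.opNorm_le_of_re_le ?_ fun b hb => ?_)
    · simpa [hre] using hrmax 0 (by simp)
    · simpa [hre] using hrmax b hb
  have hg₀ : g₀ ≠ 0 := by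
    obtain ⟨w, hw⟩ := hKne
    intro h
    simpa [← hre, h] using hrK w hw
  set g := ((‖g₀‖⁻¹ : ℝ) : 𝕜) • g₀
  have hg : ‖g‖ = 1 := norm_ofReal_inv_norm_smul hg₀
  have hgy : g y = 1 := ofReal_inv_norm_smul_apply_eq_one hy hg₀y hg₀
  have hfg := norm_sub_le_of_re_pos_of_lt_re hk.le hg.le hy hgy fun w hw => by
    rw [smul_apply, smul_eq_mul, re_ofReal_mul, hre]
    exact mul_pos (inv_pos.2 (norm_pos_iff.2 hg₀)) (hrK w hw)
  have hfy : re (f y) ≤ 1 := hf ▸ f.re_apply_le_opNorm hy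
  have hkyx := mul_nonneg hk.le (norm_nonneg (y - x))
  refine ⟨y, g, le_antisymm hy ?_, hg, hgy, by linarith, ?_⟩
  · simpa [hgy, hg] using g.le_opNorm y
  · rw [norm_sub_rev]
    rw [abs_of_nonneg (by linarith)] at hfg
    linarith

end BishopPhelpsBollobas

theorem stmt10 {𝕜 X : Type} [RCLike 𝕜]
    [NormedAddCommGroup X] [NormedSpace 𝕜 X] [CompleteSpace X]
    (h : ∀ x : X, ‖x‖ = 1 → ∃ f : X →L[𝕜] 𝕜, StronglyExposesBall f x) :
    (∀ (x : X) (f : X →L[𝕜] 𝕜), ‖x‖ = 1 → ‖f‖ = 1 → f x = 1 →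
      ∀ ε : ℝ, 0 < ε → ∃ (y : X) (g : X →L[𝕜] 𝕜),
        (∃ h' : X →L[𝕜] 𝕜, StronglyExposesBall h' y) ∧
        (∃ y' : X, StronglyExposesBall g y') ∧
        ‖g‖ = 1 ∧ g y = 1 ∧ ‖y - x‖ < ε ∧ ‖g - f‖ < ε) ∧
    (∀ ε : ℝ, 0 < ε → ε < 1 → ∃ η : ℝ, 0 < η ∧
      ∀ (x : X) (f : X →L[𝕜] 𝕜), ‖x‖ = 1 → ‖f‖ = 1 → re (f x) > 1 - η →
        ∃ (y : X) (g : X →L[𝕜] 𝕜), (∃ y' : X, StronglyExposesBall g y') ∧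
          ‖y‖ = 1 ∧ ‖g‖ = 1 ∧ g y = 1 ∧ ‖g - f‖ < ε ∧ ‖y - x‖ < ε) := by
  refine ⟨fun x f hx hf hfx ε hε => ?_, fun ε hε hε1 => ⟨(ε / 4) ^ 2, by positivity, ?_⟩⟩
  · obtain ⟨h', hh'⟩ := h x hx
    obtain ⟨g, hg, hgn, hgx, hgf⟩ := exists_stronglyExposesBall_near hh' hf hfx (δ := ε / 3)
      (by positivity)
    exact ⟨x, g, ⟨h', hh'⟩, ⟨x, hg⟩, hgn, hgx, by simpa using hε, by linarith⟩
  · intro x f hx hf hfx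
    obtain ⟨y, g₀, hy, hg₀, hg₀y, hyx, hg₀f⟩ :=
      exists_norming_pair_near hf hx.le (k := ε / 4) (by positivity) (by linarith) hfx
    obtain ⟨h', hh'⟩ := h y hy
    obtain ⟨g, hg, hgn, hgy, hgg₀⟩ := exists_stronglyExposesBall_near hh' hg₀ hg₀y (δ := ε / 8)
      (by positivity)
    refine ⟨y, g, ⟨y, hg⟩, hy, hgn, hgy, ?_, ?_⟩
    · calc ‖g - f‖ ≤ ‖g - g₀‖ + ‖g₀ - f‖ := norm_sub_le_norm_sub_add_norm_sub g g₀ f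
        _ < ε := by nlinarith
    · nlinarith
end

section
/- Let X and Y be Banach spaces, let B ⊆ S_{Y*} be a James boundary for Y, and let T : X → Y be a compact operator. Then there exists y* ∈ B such that ‖T* y*‖ = ‖T‖. -/
open Filter Topology RCLike Bornology

theorem stmt12 {𝕜 X Y : Type} [RCLike 𝕜]
    [NormedAddCommGroup X] [NormedSpace 𝕜 X] [CompleteSpace X]
    [NormedAddCommGroup Y] [NormedSpace 𝕜 Y] [CompleteSpace Y]
    (T : X →L[𝕜] Y) (hT : IsCompactOperator T)
    (B : Set (Y →L[𝕜] 𝕜)) (hB1 : ∀ g ∈ B, ‖g‖ = 1)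
    (hB2 : ∀ y : Y, ∃ g ∈ B, ‖g y‖ = ‖y‖) :
    ∃ g ∈ B, ‖g.comp T‖ = ‖T‖ := by
  set K : Set Y := closure (T '' Metric.closedBall (0 : X) 1) with hK
  have hKcomp : IsCompact K :=
    hT.isCompact_closure_image_of_isVonNBounded
      (NormedSpace.isVonNBounded_closedBall 𝕜 X 1)
  have h0K : (0 : Y) ∈ K := subset_closure ⟨0, by simp, by simp⟩
  obtain ⟨y, hyK, hymax⟩ := hKcomp.exists_isMaxOn ⟨0, h0K⟩ continuous_norm.continuousOn
  -- ‖y‖ = ‖T‖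
  have hyle : ∀ z ∈ K, ‖z‖ ≤ ‖y‖ := hymax
  have h1 : ‖T‖ ≤ ‖y‖ := by
    refine T.opNorm_le_bound (norm_nonneg y) (fun x => ?_)
    rcases eq_or_ne x 0 with rfl | hx0
    · simp
    · have hx : ‖x‖ ≠ 0 := norm_ne_zero_iff.mpr hx0
      have hmem : ((‖x‖ : 𝕜)⁻¹ • x) ∈ Metric.closedBall (0 : X) 1 := by
        simp [norm_smul, RCLike.norm_ofReal, abs_of_nonneg (norm_nonneg x),
          inv_mul_cancel₀ hx]
      have h := hyle _ (subset_closure ⟨_, hmem, rfl⟩)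
      rw [map_smul, norm_smul] at h
      have : ‖((‖x‖ : 𝕜)⁻¹)‖ = ‖x‖⁻¹ := by
        simp [RCLike.norm_ofReal, abs_of_nonneg (norm_nonneg x)]
      rw [this] at h
      calc ‖T x‖ = ‖x‖ * (‖x‖⁻¹ * ‖T x‖) := by field_simp
        _ ≤ ‖x‖ * ‖y‖ := by
            exact mul_le_mul_of_nonneg_left h (norm_nonneg x)
        _ = ‖y‖ * ‖x‖ := mul_comm _ _
  have h2 : ‖y‖ ≤ ‖T‖ := by
    have hcl : K ⊆ {z : Y | ‖z‖ ≤ ‖T‖} := by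
      refine closure_minimal ?_ (isClosed_le continuous_norm continuous_const)
      rintro z ⟨x, hx, rfl⟩
      simpa using T.unit_le_opNorm x (by simpa using Metric.mem_closedBall.mp hx)
    exact hcl hyK
  have hy : ‖y‖ = ‖T‖ := le_antisymm h2 h1
  obtain ⟨g, hgB, hgy⟩ := hB2 y
  refine ⟨g, hgB, le_antisymm ?_ ?_⟩
  · calc ‖g.comp T‖ ≤ ‖g‖ * ‖T‖ := g.opNorm_comp_le T
      _ = ‖T‖ := by rw [hB1 g hgB, one_mul]
  · have hcl : K ⊆ {z : Y | ‖g z‖ ≤ ‖g.comp T‖} := by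
      refine closure_minimal ?_ (isClosed_le (continuous_norm.comp g.continuous)
        continuous_const)
      rintro z ⟨x, hx, rfl⟩
      simpa using (g.comp T).unit_le_opNorm x (by simpa using Metric.mem_closedBall.mp hx)
    calc ‖T‖ = ‖g y‖ := by rw [hgy, hy]
      _ ≤ ‖g.comp T‖ := hcl hyK
end
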